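/- arXiv:2110.12470 — 3 statements merged into one kernel-verified Lean document; each statement's English description precedes it below -/
import Mathlib

section
/- Let P(λ) = Σ_{i=0}^d P_i λ^i be an m×n polynomial matrix of degree d > 1. Define the pencils A_s(λ), B_s(λ), C_s(λ), D_s(λ) as the blocks of the Lancaster pencil L_s(λ), the pencils A_r(λ), B_r(λ) as the blocks of the companion-type pencil L_r(λ), and let T be the associated block Hankel matrix. Then [A_s(λ) −B_s(λ)] = T · [A_r(λ) −B_r(λ)]. -/
open Matrix Polynomial

/-- Coefficient `P_i` with the convention `P_i := 0` for `i` outside `{0, ..., d}`. -/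
noncomputable def coeffP (m n d : ℕ) (P : Fin (d + 1) → Matrix (Fin m) (Fin n) ℂ)
    (i : ℕ) : Matrix (Fin m) (Fin n) ℂ :=
  if h : i < d + 1 then P ⟨i, h⟩ else 0

/-- The `(1,1)` block `A_r(λ)` of the companion-type pencil `L_r(λ)`: block
bidiagonal with `-I_n` on the diagonal and `λ I_n` on the superdiagonal. -/
noncomputable def Apenr (n d : ℕ) :
    Matrix (Fin (d - 1) × Fin n) (Fin (d - 1) × Fin n) (Polynomial ℂ) := fun p q =>
  (if p.1 = q.1 ∧ p.2 = q.2 then -1 else 0) +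
    (if p.1.1 + 1 = q.1.1 ∧ p.2 = q.2 then X else 0)

/-- The block `B_r(λ) = [0; ...; 0; -λ I_n]` of the companion-type pencil. -/
noncomputable def Bpenr (n d : ℕ) :
    Matrix (Fin (d - 1) × Fin n) (Fin n) (Polynomial ℂ) := fun p b =>
  if p.1.1 = d - 2 ∧ p.2 = b then -X else 0

/-- The `(1,1)` block `A_s(λ)` of the Lancaster pencil `L_s(λ)`: the `(j,k)` block
(`1`-indexed, `j,k = 1, ..., d-1`) is `λ P_{2d+1-j-k} - P_{2d-j-k}` with the
convention `P_i := 0` for `i > d`; so the main antidiagonal `j+k = d` carries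
`-P_d`, the next one `λ P_d - P_{d-1}`, etc. -/
noncomputable def Apens (m n d : ℕ) (P : Fin (d + 1) → Matrix (Fin m) (Fin n) ℂ) :
    Matrix (Fin (d - 1) × Fin m) (Fin (d - 1) × Fin n) (Polynomial ℂ) := fun p q =>
  X * C (coeffP m n d P (2 * d - 1 - p.1.1 - q.1.1) p.2 q.2) -
    C (coeffP m n d P (2 * d - 2 - p.1.1 - q.1.1) p.2 q.2)

/-- The block `B_s(λ)` of the Lancaster pencil: `-B_s(λ)` is the last block column
`[λ P_d; λ P_{d-1}; ...; λ P_2]`, so `B_s(λ) = -[λ P_d; ...; λ P_2]`. -/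
noncomputable def Bpens (m n d : ℕ) (P : Fin (d + 1) → Matrix (Fin m) (Fin n) ℂ) :
    Matrix (Fin (d - 1) × Fin m) (Fin n) (Polynomial ℂ) := fun p b =>
  -(X * C (coeffP m n d P (d - p.1.1) p.2 b))

/-- The constant block Hankel matrix `T` with antidiagonals `P_d, ..., P_2`. -/
noncomputable def hankelT (m n d : ℕ) (P : Fin (d + 1) → Matrix (Fin m) (Fin n) ℂ) :
    Matrix (Fin (d - 1) × Fin m) (Fin (d - 1) × Fin n) ℂ := fun p q =>
  if h : d ≤ p.1.1 + q.1.1 + 2 then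
    P ⟨2 * d - p.1.1 - q.1.1 - 2, by omega⟩ p.2 q.2
  else 0


lemma hT_eq (m n d : ℕ) (hd : 1 < d) (P : Fin (d + 1) → Matrix (Fin m) (Fin n) ℂ)
    (a b : Fin (d - 1)) (i : Fin m) (j : Fin n) :
    hankelT m n d P (a, i) (b, j) = coeffP m n d P (2 * d - 2 - a.1 - b.1) i j := by
  have ha := a.2; have hb := b.2
  simp only [hankelT, coeffP]
  by_cases h : d ≤ a.1 + b.1 + 2
  · rw [dif_pos h, dif_pos (by omega : 2 * d - 2 - a.1 - b.1 < d + 1)]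
    simp only [show 2 * d - a.1 - b.1 - 2 = 2 * d - 2 - a.1 - b.1 from by omega]
  · rw [dif_neg h, dif_neg (by omega : ¬ (2 * d - 2 - a.1 - b.1 < d + 1))]
    simp

lemma neg_ite' {α : Type*} [Neg α] (c : Prop) [Decidable c] (a b : α) :
    -(if c then a else b) = if c then -a else -b := apply_ite Neg.neg c a b

/-- `[A_s(λ)  -B_s(λ)] = T · [A_r(λ)  -B_r(λ)]` as polynomial
matrices. -/
theorem stmt_6 (m n d : ℕ) (hd : 1 < d)
    (P : Fin (d + 1) → Matrix (Fin m) (Fin n) ℂ) :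
    fromCols (Apens m n d P) (-(Bpens m n d P))
      = (hankelT m n d P).map (fun c => Polynomial.C c) *
          fromCols (Apenr n d) (-(Bpenr n d)) := by
  ext ⟨⟨pk, hpk⟩, p2⟩ j
  rcases j with q | b
  · rcases q with ⟨⟨qk, hqk⟩, q2⟩
    congr 1
    simp only [fromCols, of_apply, Sum.elim_inl, Matrix.mul_apply, Matrix.map_apply,
      Apenr, Apens, Fintype.sum_prod_type, mul_add, mul_ite, mul_neg, mul_one, mul_zero,
      ite_and, Finset.sum_add_distrib, Finset.sum_ite_irrel, Finset.sum_const_zero,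
      Finset.sum_ite_eq', Finset.mem_univ, if_true]
    rw [hT_eq m n d hd]
    rcases qk with _ | a
    · rw [Finset.sum_eq_zero (fun x _ => by simp), add_zero]
      have h0 : coeffP m n d P (2 * d - 1 - pk - 0) = 0 := by
        rw [coeffP, dif_neg (by omega)]
      rw [h0]
      simp only [Matrix.zero_apply, map_zero, mul_zero, zero_sub]
    · rw [Finset.sum_eq_single (⟨a, by omega⟩ : Fin (d - 1))]
      · rw [if_pos rfl, hT_eq m n d hd]
        have he : 2 * d - 2 - pk - a = 2 * d - 1 - pk - (a + 1) := by omega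
        rw [he]
        ring
      · intro x _ hx
        exact if_neg (fun h => hx (Fin.ext (show x.1 = a by omega)))
      · intro h; exact absurd (Finset.mem_univ _) h
  · congr 1
    simp only [fromCols, of_apply, Sum.elim_inr, Matrix.mul_apply, Matrix.map_apply,
      Matrix.neg_apply, Bpenr, Bpens, neg_ite', neg_neg, neg_zero,
      Fintype.sum_prod_type, mul_ite, mul_zero, ite_and,
      Finset.sum_ite_irrel, Finset.sum_const_zero,
      Finset.sum_ite_eq', Finset.mem_univ, if_true]
    rw [Finset.sum_eq_single (⟨d - 2, by omega⟩ : Fin (d - 1))]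
    · split_ifs with h
      · rw [hT_eq m n d hd]
        have he : 2 * d - 2 - pk - (d - 2) = d - pk := by omega
        rw [he]; ring
      · exact absurd rfl h
    · intro x _ hx
      exact if_neg (fun (h : (x : ℕ) = d - 2) => hx (Fin.ext h))
    · intro h; exact absurd (Finset.mem_univ _) h
end

section
/- Let P(λ) = Σ_{i=0}^d P_i λ^i be an m×n polynomial matrix of degree d > 1, let L_s(λ) be the Lancaster pencil of size (md)×(nd), and let T be the associated block Hankel matrix. Define the unimodular polynomial matrices V(λ) := (the (d×d) lower triangular matrix with 1's on the diagonal, last row (λ^{d−1}, ..., λ^2, λ, 1), zeros elsewhere) ⊗ I_m and W(λ) := (the d×d upper triangular Toeplitz matrix with (j,k) entry λ^{k−j} for k ≥ j) ⊗ I_n. Then V(λ) L_s(λ) W(λ) = diag(−T, P(λ)). -/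
/-!
Since `V` and `W` are Kronecker products with identity matrices, the `(a, b)` entry of every
`m × n` block of `V L_s W` only involves the `(a, b)` entries of the blocks of `L_s`; so it
suffices to treat `m = n = 1` over the commutative ring `ℂ[λ]`, with scalar coefficients
`c_i = (P_i)_{ab}`. There `W⁻¹ = I - λ N` (`N` the superdiagonal shift) is bidiagonal, and one
checks `V L_s = D W⁻¹` for `D = diag(-T, P(λ))`: the first `d - 1` rows of `V L_s` are those of
`L_s`, which are visibly those of `D W⁻¹`, and its last row `∑_q λ^{d-1-q} (row q of L_s)`
telescopes to `0` off the last column and to `P(λ)` in it. Finally `V` and `W` are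
unitriangular, hence unimodular.
-/

open Matrix Polynomial

/-- The Lancaster pencil `L_s(λ) = [[A_s(λ), -B_s(λ)],[C_s(λ), D_s(λ)]]` of size
`md × nd`, written with block indices `(j,k)` (`0`-indexed, `j,k = 0,...,d-1`):
the `(d-1,d-1)` block is `D_s(λ) = λ P_1 + P_0`; for `k < d-1` the `(d-1,k)` block
of `C_s(λ)` is `λ P_{d-k}`; for `j < d-1` the `(j,d-1)` block of `-B_s(λ)` is
`λ P_{d-j}`; and for `j,k < d-1` the `(j,k)` block of `A_s(λ)` is
`λ P_{2d-1-j-k} - P_{2d-2-j-k}` (with `P_i := 0` for `i > d`). -/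
noncomputable def lancasterLs (m n d : ℕ) (P : Fin (d + 1) → Matrix (Fin m) (Fin n) ℂ) :
    Matrix (Fin d × Fin m) (Fin d × Fin n) (Polynomial ℂ) := fun p q =>
  if p.1.1 = d - 1 ∧ q.1.1 = d - 1 then
    X * C (coeffP m n d P 1 p.2 q.2) + C (coeffP m n d P 0 p.2 q.2)
  else if p.1.1 = d - 1 then X * C (coeffP m n d P (d - q.1.1) p.2 q.2)
  else if q.1.1 = d - 1 then X * C (coeffP m n d P (d - p.1.1) p.2 q.2)
  else
    X * C (coeffP m n d P (2 * d - 1 - p.1.1 - q.1.1) p.2 q.2) -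
      C (coeffP m n d P (2 * d - 2 - p.1.1 - q.1.1) p.2 q.2)

/-- The block diagonal matrix `diag(-T, P(λ))`, where `T` is the constant block
Hankel matrix with antidiagonals `P_d, ..., P_2` (the `(j,k)` block of `T`,
`0`-indexed with `j,k < d-1`, is `P_{2d-2-j-k}` when `j+k+2 ≥ d` and `0`
otherwise), and `P(λ) = Σ_i λ^i P_i` sits in the last diagonal block. -/
noncomputable def diagTP (m n d : ℕ) (P : Fin (d + 1) → Matrix (Fin m) (Fin n) ℂ) :
    Matrix (Fin d × Fin m) (Fin d × Fin n) (Polynomial ℂ) := fun p q =>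
  if p.1.1 = d - 1 ∧ q.1.1 = d - 1 then
    ∑ i : Fin (d + 1), X ^ (i : ℕ) * C (P i p.2 q.2)
  else if p.1.1 = d - 1 ∨ q.1.1 = d - 1 then 0
  else -C (coeffP m n d P (2 * d - 2 - p.1.1 - q.1.1) p.2 q.2)

/-- The unimodular matrix `V(λ)`: the `d × d` lower triangular matrix with `1`'s
on the diagonal, last row `(λ^{d-1}, ..., λ², λ, 1)` and zeros elsewhere, tensored
(Kronecker) with `I_m`. -/
noncomputable def uniV (m d : ℕ) :
    Matrix (Fin d × Fin m) (Fin d × Fin m) (Polynomial ℂ) := fun p q =>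
  (if p.1 = q.1 then 1 else if p.1.1 = d - 1 then X ^ (d - 1 - q.1.1) else 0) *
    (if p.2 = q.2 then 1 else 0)

/-- The unimodular matrix `W(λ)`: the `d × d` upper triangular Toeplitz matrix with
`(j,k)` entry `λ^{k-j}` for `k ≥ j`, tensored (Kronecker) with `I_n`. -/
noncomputable def uniW (n d : ℕ) :
    Matrix (Fin d × Fin n) (Fin d × Fin n) (Polynomial ℂ) := fun p q =>
  (if p.1.1 ≤ q.1.1 then X ^ (q.1.1 - p.1.1) else 0) *
    (if p.2 = q.2 then 1 else 0)

open Finset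
open scoped Kronecker

section NatIndexed

variable {R : Type*}

/-- Entries are read off `ℕ`-indices so that index arithmetic such as `d - 1 - q` and
telescoping over `range d` stay in `ℕ`. -/
def natMatrix (d : ℕ) (f : ℕ → ℕ → R) : Matrix (Fin d) (Fin d) R :=
  Matrix.of fun i j => f i j

theorem natMatrix_congr {d : ℕ} {f g : ℕ → ℕ → R} (h : ∀ i < d, ∀ k < d, f i k = g i k) :
    natMatrix d f = natMatrix d g :=
  Matrix.ext fun i k => h i i.2 k k.2

theorem natMatrix_mul [NonUnitalNonAssocSemiring R] (d : ℕ) (f g : ℕ → ℕ → R) :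
    natMatrix d f * natMatrix d g = natMatrix d fun i k => ∑ s ∈ range d, f i s * g s k := by
  ext i k
  simp [natMatrix, Matrix.mul_apply, Fin.sum_univ_eq_sum_range (fun s => f i s * g s k)]

end NatIndexed

theorem kronecker_one_mul_mul_kronecker_one_apply {R ι κ α β : Type*} [NonAssocSemiring R]
    [Fintype ι] [Fintype κ] [Fintype α] [Fintype β] [DecidableEq α] [DecidableEq β]
    (A : Matrix ι ι R) (M : Matrix (ι × α) (κ × β) R) (B : Matrix κ κ R)
    (i : ι) (a : α) (k : κ) (b : β) :
    ((A ⊗ₖ (1 : Matrix α α R)) * M * (B ⊗ₖ (1 : Matrix β β R))) (i, a) (k, b) =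
      (A * M.submatrix (·, a) (·, b) * B) i k := by
  simp [Matrix.mul_apply, Fintype.sum_prod_type, Matrix.one_apply, Finset.sum_mul]

section ScalarPencil

variable {R : Type*} [CommRing R] (d : ℕ) (x : R) (c : ℕ → R)

/-- The Lancaster pencil for `m = n = 1`, with coefficients `c i` in place of `P_i`. -/
def pencilEntry (q r : ℕ) : R :=
  if q = d - 1 ∧ r = d - 1 then x * c 1 + c 0
  else if q = d - 1 then x * c (d - r)
  else if r = d - 1 then x * c (d - q)
  else x * c (2 * d - 1 - q - r) - c (2 * d - 2 - q - r)

def diagEntry (j k : ℕ) : R :=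
  if j = d - 1 ∧ k = d - 1 then ∑ i ∈ range (d + 1), x ^ i * c i
  else if j = d - 1 ∨ k = d - 1 then 0
  else -c (2 * d - 2 - j - k)

def vEntry (j q : ℕ) : R :=
  if j = q then 1 else if j = d - 1 then x ^ (d - 1 - q) else 0

def wEntry (r k : ℕ) : R :=
  if r ≤ k then x ^ (k - r) else 0

def wInvEntry (p q : ℕ) : R :=
  if p = q then 1 else if q = p + 1 then -x else 0

variable {d c}

theorem vEntry_last (q : ℕ) : vEntry d x (d - 1) q = x ^ (d - 1 - q) := by
  by_cases h : d - 1 = q <;> simp [vEntry, h]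

theorem diagEntry_last (k : ℕ) :
    diagEntry d x c (d - 1) k = if k = d - 1 then ∑ i ∈ range (d + 1), x ^ i * c i else 0 := by
  by_cases h : k = d - 1 <;> simp [diagEntry, h]

theorem sum_mul_wInvEntry (f : ℕ → R) {r : ℕ} (hr : r < d) :
    ∑ s ∈ range d, f s * wInvEntry x s r = f r - if 0 < r then x * f (r - 1) else 0 := by
  have hsplit : ∀ s, f s * wInvEntry x s r =
      (if s = r then f s else 0) - if s + 1 = r then x * f s else 0 := by
    intro s
    unfold wInvEntry
    split_ifs <;> first | omega | ring
  rw [sum_congr rfl fun s _ => hsplit s, sum_sub_distrib, sum_ite_eq', if_pos (mem_range.2 hr)]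
  rcases Nat.eq_zero_or_pos r with rfl | hr0
  · simp
  · obtain ⟨t, rfl⟩ : ∃ t, r = t + 1 := ⟨r - 1, by omega⟩
    simp [sum_ite_eq', show t < d by omega]

theorem sum_wInvEntry_mul_wEntry {p q : ℕ} (hp : p < d) (hq : q < d) :
    ∑ s ∈ range d, wInvEntry x p s * wEntry x s q = if p = q then 1 else 0 := by
  have hsplit : ∀ s, wInvEntry x p s * wEntry x s q =
      (if p = s then wEntry x s q else 0) - if s = p + 1 then x * wEntry x s q else 0 := by
    intro s
    unfold wInvEntry
    split_ifs <;> first | omega | ring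
  rw [sum_congr rfl fun s _ => hsplit s, sum_sub_distrib, sum_ite_eq, sum_ite_eq',
    if_pos (mem_range.2 hp)]
  rcases lt_trichotomy p q with hpq | rfl | hpq
  · rw [if_pos (mem_range.2 (by omega)), if_neg hpq.ne, wEntry, wEntry, if_pos hpq.le,
      if_pos (Nat.succ_le_of_lt hpq), show q - p = q - (p + 1) + 1 by omega, pow_succ]
    ring
  · simp [wEntry]
  · simp [wEntry, hpq.ne', not_le.2 hpq, not_le.2 (hpq.trans (Nat.lt_succ_self p))]

theorem pencilEntry_eq_of_lt_sub_one (hc : ∀ i, d < i → c i = 0) {j r : ℕ} (hj : j < d - 1)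
    (hr : r < d) :
    pencilEntry d x c j r =
      diagEntry d x c j r - if 0 < r then x * diagEntry d x c j (r - 1) else 0 := by
  have hj' : j ≠ d - 1 := hj.ne
  rcases Nat.eq_zero_or_pos r with rfl | hr0
  · rw [pencilEntry, diagEntry, if_neg (by omega), if_neg hj', if_neg (by omega),
      if_neg (by omega), if_neg (by omega), if_neg (lt_irrefl 0), hc _ (by omega)]
    ring
  rcases eq_or_ne r (d - 1) with rfl | hr'
  · rw [pencilEntry, diagEntry, diagEntry, if_neg (by omega), if_neg hj', if_pos rfl,
      if_neg (by omega), if_pos (Or.inr rfl), if_pos hr0, if_neg (by omega), if_neg (by omega),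
      show 2 * d - 2 - j - (d - 1 - 1) = d - j by omega]
    ring
  · rw [pencilEntry, diagEntry, diagEntry, if_neg (by omega), if_neg hj', if_neg hr',
      if_neg (by omega), if_neg (by omega), if_pos hr0, if_neg (by omega), if_neg (by omega),
      show 2 * d - 2 - j - (r - 1) = 2 * d - 1 - j - r by omega]
    ring

theorem sum_pow_mul_pencilEntry_of_lt (hc : ∀ i, d < i → c i = 0) {r : ℕ} (hr : r < d - 1) :
    ∑ q ∈ range d, x ^ (d - 1 - q) * pencilEntry d x c q r = 0 := by
  obtain ⟨e, rfl⟩ : ∃ e, d = e + 1 := ⟨d - 1, by omega⟩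
  have htel : ∀ q ∈ range e, x ^ (e - q) * pencilEntry (e + 1) x c q r =
      x ^ (e + 1 - q) * c (2 * e + 1 - q - r) -
        x ^ (e + 1 - (q + 1)) * c (2 * e + 1 - (q + 1) - r) := by
    intro q hq
    rw [mem_range] at hq
    rw [pencilEntry, if_neg (by omega), if_neg (by omega), if_neg (by omega),
      show e + 1 - q = e - q + 1 by omega, show e + 1 - (q + 1) = e - q by omega,
      show 2 * (e + 1) - 1 - q - r = 2 * e + 1 - q - r by omega,
      show 2 * (e + 1) - 2 - q - r = 2 * e + 1 - (q + 1) - r by omega]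
    ring
  simp only [Nat.add_sub_cancel]
  rw [sum_range_succ, sum_congr rfl htel, sum_range_sub', hc _ (by omega), pencilEntry,
    if_neg (by omega), if_pos (by omega), show 2 * e + 1 - e - r = e + 1 - r by omega,
    show e + 1 - e = 1 by omega, Nat.sub_self]
  ring

theorem sum_pow_mul_pencilEntry_last (hd : 0 < d) :
    ∑ q ∈ range d, x ^ (d - 1 - q) * pencilEntry d x c q (d - 1) =
      ∑ i ∈ range (d + 1), x ^ i * c i := by
  obtain ⟨e, rfl⟩ : ∃ e, d = e + 1 := ⟨d - 1, by omega⟩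
  have hrow : ∀ q ∈ range e, x ^ (e - q) * pencilEntry (e + 1) x c q e =
      x ^ (e - 1 - q + 2) * c (e - 1 - q + 2) := by
    intro q hq
    rw [mem_range] at hq
    rw [pencilEntry, if_neg (by omega), if_neg (by omega), if_pos (by omega),
      show e - 1 - q + 2 = e - q + 1 by omega, show e + 1 - q = e - q + 1 by omega]
    ring
  simp only [Nat.add_sub_cancel]
  rw [sum_range_succ, sum_congr rfl hrow, sum_range_reflect (fun i => x ^ (i + 2) * c (i + 2)),
    sum_range_succ' _ (e + 1), sum_range_succ', pencilEntry, if_pos ⟨rfl, rfl⟩]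
  simp only [Nat.sub_self, pow_zero, pow_one, zero_add]
  ring

/-- `V L = D W⁻¹`, entrywise. -/
theorem sum_vEntry_mul_pencilEntry (hc : ∀ i, d < i → c i = 0) {j r : ℕ} (hj : j < d)
    (hr : r < d) :
    ∑ q ∈ range d, vEntry d x j q * pencilEntry d x c q r =
      diagEntry d x c j r - if 0 < r then x * diagEntry d x c j (r - 1) else 0 := by
  rcases eq_or_ne j (d - 1) with rfl | hj'
  · have hprev : (if 0 < r then x * diagEntry d x c (d - 1) (r - 1) else 0) = 0 := by
      split_ifs with hr0
      · rw [diagEntry_last, if_neg (by omega), mul_zero]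
      · rfl
    rw [hprev, sub_zero, diagEntry_last]
    simp only [vEntry_last]
    rcases eq_or_ne r (d - 1) with rfl | hr'
    · rw [if_pos rfl, sum_pow_mul_pencilEntry_last x (by omega)]
    · rw [if_neg hr', sum_pow_mul_pencilEntry_of_lt x hc (by omega)]
  · have hv : ∀ q, vEntry d x j q = if j = q then 1 else 0 := fun q => by
      simp [vEntry, hj']
    simp only [hv, ite_mul, one_mul, zero_mul, sum_ite_eq, mem_range, hj, if_true]
    exact pencilEntry_eq_of_lt_sub_one x hc (by omega) hr

theorem natMatrix_wInvEntry_mul_wEntry :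
    natMatrix d (wInvEntry x) * natMatrix d (wEntry x) = 1 := by
  rw [natMatrix_mul]
  ext p q
  simp [natMatrix, sum_wInvEntry_mul_wEntry x p.2 q.2, Matrix.one_apply, Fin.val_inj]

theorem natMatrix_vEntry_mul_pencilEntry_mul_wEntry (hc : ∀ i, d < i → c i = 0) :
    natMatrix d (vEntry d x) * natMatrix d (pencilEntry d x c) * natMatrix d (wEntry x) =
      natMatrix d (diagEntry d x c) := by
  have hVL : natMatrix d (vEntry d x) * natMatrix d (pencilEntry d x c) =
      natMatrix d (diagEntry d x c) * natMatrix d (wInvEntry x) := by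
    rw [natMatrix_mul, natMatrix_mul]
    exact natMatrix_congr fun j hj r hr => by
      rw [sum_vEntry_mul_pencilEntry x hc hj hr, sum_mul_wInvEntry x _ hr]
  rw [hVL, Matrix.mul_assoc, natMatrix_wInvEntry_mul_wEntry, Matrix.mul_one]

theorem det_natMatrix_vEntry : (natMatrix d (vEntry d x)).det = 1 := by
  rw [Matrix.det_of_isLowerTriangular]
  · simp [natMatrix, vEntry]
  · intro j q hjq
    have hjq : (j : ℕ) < q := hjq
    simp [natMatrix, vEntry, hjq.ne, show (j : ℕ) ≠ d - 1 by omega]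

theorem det_natMatrix_wEntry : (natMatrix d (wEntry x)).det = 1 := by
  rw [Matrix.det_of_isUpperTriangular]
  · simp [natMatrix, wEntry]
  · intro r k hkr
    simp [natMatrix, wEntry, not_le.2 (show k < r from hkr)]

end ScalarPencil

section Blocks

variable (m n d : ℕ) (P : Fin (d + 1) → Matrix (Fin m) (Fin n) ℂ)

theorem uniV_eq_kronecker : uniV m d = natMatrix d (vEntry d X) ⊗ₖ 1 := by
  ext ⟨j, a⟩ ⟨q, b⟩
  simp [uniV, natMatrix, vEntry, Matrix.one_apply, Fin.val_inj]

theorem uniW_eq_kronecker : uniW n d = natMatrix d (wEntry X) ⊗ₖ 1 := by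
  ext ⟨r, a⟩ ⟨k, b⟩
  simp [uniW, natMatrix, wEntry, Matrix.one_apply]

theorem lancasterLs_submatrix (a : Fin m) (b : Fin n) :
    (lancasterLs m n d P).submatrix (·, a) (·, b) =
      natMatrix d (pencilEntry d X fun i => C (coeffP m n d P i a b)) :=
  rfl

theorem coeffP_val (i : Fin (d + 1)) : coeffP m n d P i = P i := by
  rw [coeffP, dif_pos i.2]

theorem coeffP_eq_zero {i : ℕ} (hi : d < i) : coeffP m n d P i = 0 :=
  dif_neg (by omega)

theorem diagTP_apply (j k : Fin d) (a : Fin m) (b : Fin n) :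
    diagTP m n d P (j, a) (k, b) = diagEntry d X (fun i => C (coeffP m n d P i a b)) j k := by
  have hsum : ∑ i : Fin (d + 1), X ^ (i : ℕ) * C (P i a b) =
      ∑ i ∈ range (d + 1), X ^ i * C (coeffP m n d P i a b) := by
    simp only [← Fin.sum_univ_eq_sum_range (fun i => X ^ i * C (coeffP m n d P i a b)),
      coeffP_val]
  simp only [diagTP, diagEntry, hsum]

end Blocks

theorem stmt_9_general (m n d : ℕ)
    (P : Fin (d + 1) → Matrix (Fin m) (Fin n) ℂ) :
    IsUnit (uniV m d).det ∧ IsUnit (uniW n d).det ∧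
      uniV m d * lancasterLs m n d P * uniW n d = diagTP m n d P := by
  refine ⟨?_, ?_, ?_⟩
  · simp [uniV_eq_kronecker, det_kronecker, det_natMatrix_vEntry]
  · simp [uniW_eq_kronecker, det_kronecker, det_natMatrix_wEntry]
  · ext ⟨j, a⟩ ⟨k, b⟩
    rw [uniV_eq_kronecker, uniW_eq_kronecker, kronecker_one_mul_mul_kronecker_one_apply,
      lancasterLs_submatrix, natMatrix_vEntry_mul_pencilEntry_mul_wEntry _
        fun i hi => by rw [coeffP_eq_zero m n d P hi, Matrix.zero_apply, map_zero],
      diagTP_apply]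
    rfl

/-- `V(λ)` and `W(λ)` are unimodular (their determinants are units)
and `V(λ) L_s(λ) W(λ) = diag(-T, P(λ))`. -/
theorem stmt_9 (m n d : ℕ) (hd : 1 < d)
    (P : Fin (d + 1) → Matrix (Fin m) (Fin n) ℂ) :
    IsUnit (uniV m d).det ∧ IsUnit (uniW n d).det ∧
      uniV m d * lancasterLs m n d P * uniW n d = diagTP m n d P :=
  stmt_9_general m n d P
end

section
/- Let P(λ) be an m×n polynomial matrix of degree d > 1 with block Hankel matrix T of rank r, and suppose T is singular (r < min(m,n)(d−1)). Then the Lancaster pencil L_s(λ) is a singular pencil, i.e., either its rows or its columns are linearly dependent over ℂ(λ); in fact L_s(λ) is strictly equivalent to diag(0_{(m(d−1)−r)×(n(d−1)−r)}, Ĺ(λ)) for some pencil Ĺ(λ) of size (r+m)×(r+n), hence L_s(λ) has at least m(d−1)−r left minimal indices equal to 0 and n(d−1)−r right minimal indices equal to 0. -/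
open Matrix Polynomial

/-- The embedding of polynomials into the field of rational functions `ℂ(λ)`. -/
noncomputable def toRat (q : Polynomial ℂ) : RatFunc ℂ :=
  algebraMap (Polynomial ℂ) (RatFunc ℂ) q

/-- extend a vector on `Fin (d-1) × Fin m` by zero to `Fin d × Fin m` -/
noncomputable def extL (m d : ℕ) (w : Fin (d - 1) × Fin m → ℂ) : Fin d × Fin m → ℂ :=
  fun p => if h : p.1.1 < d - 1 then w (⟨p.1.1, h⟩, p.2) else 0

lemma coeffP_eq_hankelT (m n d : ℕ) (hd : 1 < d) (P : Fin (d + 1) → Matrix (Fin m) (Fin n) ℂ)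
    (i : ℕ) (a b : Fin (d - 1)) (hi : i = 2 * d - 2 - a.1 - b.1) (pi : Fin m) (qj : Fin n) :
    coeffP m n d P i pi qj = hankelT m n d P (a, pi) (b, qj) := by
  have ha := a.isLt; have hb := b.isLt
  subst hi
  unfold coeffP hankelT
  dsimp only
  split_ifs with h1 h2 h2
  · simp only [show 2 * d - 2 - a.1 - b.1 = 2 * d - a.1 - b.1 - 2 from by omega]
  · omega
  · omega
  · simp

lemma coeffP_zero_of_big (m n d : ℕ) (P : Fin (d + 1) → Matrix (Fin m) (Fin n) ℂ)
    (i : ℕ) (hi : d < i) (pi : Fin m) (qj : Fin n) : coeffP m n d P i pi qj = 0 := by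
  unfold coeffP
  rw [dif_neg (by omega)]
  simp

lemma key_left (m n d : ℕ) (hd : 1 < d) (P : Fin (d + 1) → Matrix (Fin m) (Fin n) ℂ)
    (w : Fin (d - 1) × Fin m → ℂ) (hw : w ᵥ* hankelT m n d P = 0) (q : Fin d × Fin n) :
    ∑ p : Fin d × Fin m, C (extL m d w p) * lancasterLs m n d P p q = 0 := by
  obtain ⟨e, rfl⟩ : ∃ e, d = e + 2 := ⟨d - 2, by omega⟩
  have hw' : ∀ (c : Fin (e + 1)) (qj : Fin n),
      ∑ p : Fin (e + 1) × Fin m, w p * hankelT m n (e + 2) P p (c, qj) = 0 := by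
    intro c qj
    have := congrFun hw (c, qj)
    simpa [Matrix.vecMul, dotProduct] using this
  rw [Fintype.sum_prod_type, Fin.sum_univ_castSucc]
  have hlast : ∀ pi : Fin m,
      C (extL m (e + 2) w (Fin.last (e + 1), pi)) *
          lancasterLs m n (e + 2) P (Fin.last (e + 1), pi) q = 0 := by
    intro pi
    simp [extL, Fin.last]
  simp only [hlast, Finset.sum_const_zero, add_zero]
  have hcs : ∀ (pb : Fin (e + 1)) (pi : Fin m),
      extL m (e + 2) w ((Fin.castSucc pb), pi) = w (pb, pi) := by
    intro pb pi
    simp [extL, pb.isLt]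
  simp only [hcs]
  obtain ⟨qb, qj⟩ := q
  have hw' : ∀ (c : Fin (e + 1)) (qj : Fin n),
      ∑ pb : Fin (e + 1), ∑ pi : Fin m,
        w (pb, pi) * hankelT m n (e + 2) P ((pb, pi) : Fin (e+1) × Fin m) (c, qj) = 0 := by
    intro c qj
    have h := hw' c qj
    rwa [Fintype.sum_prod_type] at h
  by_cases hq : qb.1 = e + 1
  · -- last block column
    have hterm : ∀ (pb : Fin (e + 1)) (pi : Fin m),
        C (w (pb, pi)) * lancasterLs m n (e + 2) P (pb.castSucc, pi) (qb, qj)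
          = X * C (w (pb, pi) *
              hankelT m n (e + 2) P ((pb, pi) : Fin (e+1) × Fin m) ((⟨e, by omega⟩ : Fin (e+1)), qj)) := by
      intro pb pi
      have hpb := pb.isLt
      simp only [lancasterLs]
      try dsimp only
      rw [if_neg (by simp only [Fin.coe_castSucc] <;> omega),
        if_neg (by simp only [Fin.coe_castSucc] <;> omega), if_pos (show (qb:ℕ) = e+2-1 by omega)]
      rw [coeffP_eq_hankelT m n (e + 2) (by omega) P _ (show Fin (e+2-1) from pb)
        (⟨e, by omega⟩ : Fin (e+2-1)) (by simp only [Fin.coe_castSucc] <;> omega) pi qj]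
      rw [C_mul]
      ring
    simp only [hterm, ← Finset.mul_sum, ← map_sum, hw', map_zero, mul_zero]
  · have hqe : qb.1 < e + 1 := by have := qb.isLt; omega
    by_cases hq0 : qb.1 = 0
    · -- first block column
      have hterm : ∀ (pb : Fin (e + 1)) (pi : Fin m),
          C (w (pb, pi)) * lancasterLs m n (e + 2) P (pb.castSucc, pi) (qb, qj)
            = - C (w (pb, pi) *
                hankelT m n (e + 2) P ((pb, pi) : Fin (e+1) × Fin m) ((⟨qb.1, hqe⟩ : Fin (e+1)), qj)) := by
        intro pb pi
        have hpb := pb.isLt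
        simp only [lancasterLs]
        try dsimp only
        rw [if_neg (by simp only [Fin.coe_castSucc] <;> omega),
          if_neg (by simp only [Fin.coe_castSucc] <;> omega),
          if_neg (by omega)]
        rw [coeffP_zero_of_big m n (e + 2) P _ (by simp only [Fin.coe_castSucc] <;> omega) pi qj]
        rw [coeffP_eq_hankelT m n (e + 2) (by omega) P _ (show Fin (e+2-1) from pb)
          (⟨qb.1, by omega⟩ : Fin (e+2-1)) (by simp only [Fin.coe_castSucc] <;> omega) pi qj]
        rw [C_mul]
        simp
      simp only [hterm, Finset.sum_neg_distrib, ← map_sum, hw', map_zero, neg_zero]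
    · -- middle block column
      have hterm : ∀ (pb : Fin (e + 1)) (pi : Fin m),
          C (w (pb, pi)) * lancasterLs m n (e + 2) P (pb.castSucc, pi) (qb, qj)
            = X * C (w (pb, pi) *
                hankelT m n (e + 2) P ((pb, pi) : Fin (e+1) × Fin m) ((⟨qb.1 - 1, by omega⟩ : Fin (e+1)), qj))
              - C (w (pb, pi) *
                hankelT m n (e + 2) P ((pb, pi) : Fin (e+1) × Fin m) ((⟨qb.1, hqe⟩ : Fin (e+1)), qj)) := by
        intro pb pi
        have hpb := pb.isLt
        simp only [lancasterLs]
        try dsimp only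
        rw [if_neg (by simp only [Fin.coe_castSucc] <;> omega),
          if_neg (by simp only [Fin.coe_castSucc] <;> omega),
          if_neg (by omega)]
        rw [coeffP_eq_hankelT m n (e + 2) (by omega) P _ (show Fin (e+2-1) from pb)
          (⟨qb.1 - 1, by omega⟩ : Fin (e+2-1)) (by simp only [Fin.coe_castSucc] <;> omega) pi qj]
        rw [coeffP_eq_hankelT m n (e + 2) (by omega) P _ (show Fin (e+2-1) from pb)
          (⟨qb.1, by omega⟩ : Fin (e+2-1)) (by simp only [Fin.coe_castSucc] <;> omega) pi qj]
        rw [C_mul, C_mul]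
        simp only [Fin.eta]
        ring
      simp only [hterm, Finset.sum_sub_distrib, ← Finset.mul_sum, ← map_sum, hw',
        map_zero, mul_zero, neg_zero, sub_zero]


lemma lancasterLs_transpose (m n d : ℕ) (P : Fin (d + 1) → Matrix (Fin m) (Fin n) ℂ)
    (p : Fin d × Fin m) (q : Fin d × Fin n) :
    lancasterLs n m d (fun i => (P i)ᵀ) q p = lancasterLs m n d P p q := by
  obtain ⟨pb, pi⟩ := p
  obtain ⟨qb, qj⟩ := q
  unfold lancasterLs
  dsimp only
  by_cases hp : pb.1 = d - 1 <;> by_cases hq : qb.1 = d - 1 <;>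
    simp only [hp, hq, if_true, if_false, and_true, and_false, true_and, false_and,
      and_self, if_neg, if_pos, ite_true, ite_false, eq_self_iff_true, not_false_iff] <;>
    [skip; skip; skip; skip]
  · unfold coeffP; split_ifs <;> simp
  · unfold coeffP; split_ifs <;> simp
  · unfold coeffP; split_ifs <;> simp
  · rw [show 2 * d - 1 - qb.1 - pb.1 = 2 * d - 1 - pb.1 - qb.1 from by omega,
      show 2 * d - 2 - qb.1 - pb.1 = 2 * d - 2 - pb.1 - qb.1 from by omega]
    unfold coeffP; split_ifs <;> simp

lemma hankelT_transpose (m n d : ℕ) (P : Fin (d + 1) → Matrix (Fin m) (Fin n) ℂ)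
    (a : Fin (d - 1) × Fin m) (b : Fin (d - 1) × Fin n) :
    hankelT n m d (fun i => (P i)ᵀ) b a = hankelT m n d P a b := by
  unfold hankelT
  dsimp only
  split_ifs with h1 h2 h2
  · simp only [Matrix.transpose_apply]
    congr 1
    exact Fin.ext (by simp; omega)
  · omega
  · omega
  · rfl

/-- `extL` as a linear map. -/
noncomputable def extLinMap (m d : ℕ) : ((Fin (d - 1) × Fin m) → ℂ) →ₗ[ℂ] ((Fin d × Fin m) → ℂ) where
  toFun := extL m d
  map_add' w1 w2 := by
    funext p; unfold extL
    simp only [Pi.add_apply]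
    split_ifs <;> simp
  map_smul' c w1 := by
    funext p; unfold extL
    simp only [Pi.smul_apply, smul_eq_mul, RingHom.id_apply]
    split_ifs <;> simp

lemma extLinMap_injective (m d : ℕ) (hd : 1 < d) : Function.Injective (extLinMap m d) := by
  intro w1 w2 h
  funext a
  obtain ⟨ab, ai⟩ := a
  have hab : (ab.1 : ℕ) < d := by have := ab.isLt; omega
  have := congrFun h ((⟨ab.1, hab⟩ : Fin d), ai)
  simpa [extLinMap, extL, ab.isLt, Fin.eta] using this

lemma exists_U (m n d k : ℕ) (hd : 1 < d) (P : Fin (d + 1) → Matrix (Fin m) (Fin n) ℂ)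
    (hkval : k = m * (d - 1) - (hankelT m n d P).rank) :
    ∃ U : Matrix (Fin k) (Fin d × Fin m) ℂ,
      LinearIndependent ℂ (fun i => U i) ∧
      ∀ i (q : Fin d × Fin n), ∑ p : Fin d × Fin m, C (U i p) * lancasterLs m n d P p q = 0 := by
  subst hkval
  set T := hankelT m n d P with hT
  set k := m * (d - 1) - T.rank with hk
  have hrankle : T.rank ≤ (d - 1) * m := by
    have := T.rank_le_card_height
    simpa using this
  have hker : Module.finrank ℂ (LinearMap.ker T.vecMulLinear) = k := by
    have h1 := LinearMap.finrank_range_add_finrank_ker T.vecMulLinear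
    rw [range_vecMulLinear, ← Matrix.rank_eq_finrank_span_row, Module.finrank_pi] at h1
    simp only [Fintype.card_prod, Fintype.card_fin] at h1
    have hcomm : m * (d - 1) = (d - 1) * m := Nat.mul_comm _ _
    omega
  let b : Module.Basis (Fin k) ℂ (LinearMap.ker T.vecMulLinear) := Module.finBasisOfFinrankEq ℂ _ hker
  refine ⟨Matrix.of (fun i => extLinMap m d ((b i : _) : (Fin (d - 1) × Fin m) → ℂ)), ?_, ?_⟩
  · have li1 : LinearIndependent ℂ (fun i => ((b i : _) : (Fin (d - 1) × Fin m) → ℂ)) :=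
      b.linearIndependent.map' (LinearMap.ker T.vecMulLinear).subtype
        (Submodule.ker_subtype _)
    exact li1.map' (extLinMap m d) (LinearMap.ker_eq_bot.mpr (extLinMap_injective m d hd))
  · intro i q
    have hmem := (b i).2
    rw [LinearMap.mem_ker] at hmem
    have hw : ((b i : _) : (Fin (d - 1) × Fin m) → ℂ) ᵥ* T = 0 := by
      rw [← Matrix.vecMulLinear_apply]; exact hmem
    exact key_left m n d hd P _ hw q

lemma exists_invertible_extension {N k : ℕ} (hkN : k ≤ N) (u : Fin k → (Fin N → ℂ))
    (hu : LinearIndependent ℂ u) :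
    ∃ E : Matrix (Fin N) (Fin N) ℂ, IsUnit E.det ∧
      ∀ (i : Fin N) (h : i.1 < k), E i = u ⟨i.1, h⟩ := by
  set W : Submodule ℂ (Fin N → ℂ) := Submodule.span ℂ (Set.range u) with hWdef
  obtain ⟨W', hcompl⟩ := W.exists_isCompl
  have hW : Module.finrank ℂ W = k := by
    rw [hWdef, finrank_span_eq_card hu, Fintype.card_fin]
  have hW' : Module.finrank ℂ W' = N - k := by
    have h1 := Submodule.finrank_add_eq_of_isCompl hcompl
    rw [hW, Module.finrank_pi, Fintype.card_fin] at h1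
    omega
  let bW' : Module.Basis (Fin (N - k)) ℂ W' := Module.finBasisOfFinrankEq ℂ _ hW'
  set v : Fin (N - k) → (Fin N → ℂ) := fun j => ((bW' j : _) : Fin N → ℂ) with hvdef
  have hv : LinearIndependent ℂ v :=
    bW'.linearIndependent.map' W'.subtype (Submodule.ker_subtype _)
  have hdisj : Disjoint (Submodule.span ℂ (Set.range u)) (Submodule.span ℂ (Set.range v)) := by
    refine hcompl.disjoint.mono_right (Submodule.span_le.mpr ?_)
    rintro x ⟨j, rfl⟩
    exact (bW' j).2
  have hli : LinearIndependent ℂ (Sum.elim u v) := hu.sum_type hv hdisj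
  set g : Fin N → Fin k ⊕ Fin (N - k) := fun i =>
    if h : i.1 < k then Sum.inl ⟨i.1, h⟩ else Sum.inr ⟨i.1 - k, by omega⟩ with hgdef
  have hginj : Function.Injective g := by
    intro a b hab
    simp only [hgdef] at hab
    split_ifs at hab <;>
      simp only [Sum.inl.injEq, Sum.inr.injEq, Fin.mk.injEq] at hab <;>
      (exact Fin.ext (by omega))
  refine ⟨Matrix.of (Sum.elim u v ∘ g), ?_, ?_⟩
  · exact (Matrix.isUnit_iff_isUnit_det _).mp
      (Matrix.linearIndependent_rows_iff_isUnit.mp (hli.comp g hginj))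
  · intro i h
    show Sum.elim u v (g i) = _
    rw [hgdef]
    simp only [dif_pos h, Sum.elim_inl]

set_option maxHeartbeats 2000000 in
set_option synthInstance.maxHeartbeats 400000 in
/-- if `T` has rank `r < min(m,n)(d-1)` (so `T` is singular), then:
(a) the Lancaster pencil `L_s(λ)` is a singular pencil, i.e. its rows or its
columns are linearly dependent over `ℂ(λ)`;
(b) `L_s(λ)` is strictly equivalent (via constant invertible `E`, `F`) to
`diag(0_{(m(d-1)-r)×(n(d-1)-r)}, Ĺ(λ))`, i.e. after the equivalence every entry in
the first `m(d-1)-r` rows or first `n(d-1)-r` columns vanishes (the remaining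
`(r+m)×(r+n)` block being the pencil `Ĺ(λ)`);
(c) `L_s(λ)` has at least `m(d-1)-r` left minimal indices equal to `0` and at
least `n(d-1)-r` right minimal indices equal to `0`: there are full-rank constant
matrices `Us`, `Vs` of those sizes with `Us L_s(λ) = 0` and `L_s(λ) Vs = 0`. -/
theorem stmt_10 (m n d r : ℕ) (hd : 1 < d)
    (P : Fin (d + 1) → Matrix (Fin m) (Fin n) ℂ)
    (hr : (hankelT m n d P).rank = r) (hsing : r < min m n * (d - 1)) :
    (¬ LinearIndependent (RatFunc ℂ)
        (fun i : Fin d × Fin m => (lancasterLs m n d P).map toRat i) ∨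
      ¬ LinearIndependent (RatFunc ℂ)
        (fun j : Fin d × Fin n => ((lancasterLs m n d P).map toRat)ᵀ j)) ∧
    (∃ (E : Matrix (Fin (d * m)) (Fin (d * m)) ℂ)
        (F : Matrix (Fin (d * n)) (Fin (d * n)) ℂ),
      IsUnit E.det ∧ IsUnit F.det ∧
        ∀ (i : Fin (d * m)) (j : Fin (d * n)),
          (i.1 < m * (d - 1) - r ∨ j.1 < n * (d - 1) - r) →
            (E.map (fun c => C c) *
                (Matrix.reindex finProdFinEquiv finProdFinEquiv
                  (lancasterLs m n d P)) *
                F.map (fun c => C c)) i j = 0) ∧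
    (∃ Us : Matrix (Fin (m * (d - 1) - r)) (Fin d × Fin m) ℂ,
      Us.rank = m * (d - 1) - r ∧
        Us.map (fun c => C c) * lancasterLs m n d P = 0) ∧
    (∃ Vs : Matrix (Fin d × Fin n) (Fin (n * (d - 1) - r)) ℂ,
      Vs.rank = n * (d - 1) - r ∧
        lancasterLs m n d P * Vs.map (fun c => C c) = 0) := by
  subst hr
  -- abbreviations
  have hT' : hankelT n m d (fun i => (P i)ᵀ) = (hankelT m n d P)ᵀ := by
    ext x y
    rw [Matrix.transpose_apply]
    exact hankelT_transpose m n d P y x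
  have hrank' : (hankelT n m d (fun i => (P i)ᵀ)).rank = (hankelT m n d P).rank := by
    rw [hT', Matrix.rank_transpose]
  have hrm : (hankelT m n d P).rank < m * (d - 1) :=
    lt_of_lt_of_le hsing (Nat.mul_le_mul_right _ (min_le_left m n))
  have hrn : (hankelT m n d P).rank < n * (d - 1) :=
    lt_of_lt_of_le hsing (Nat.mul_le_mul_right _ (min_le_right m n))
  obtain ⟨U, hUli, hUzero⟩ :=
    exists_U m n d (m * (d - 1) - (hankelT m n d P).rank) hd P rfl
  obtain ⟨V0, hVli, hVzero⟩ :=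
    exists_U n m d (n * (d - 1) - (hankelT m n d P).rank) hd (fun i => (P i)ᵀ)
      (by rw [hrank'])
  have hVzero' : ∀ j (p : Fin d × Fin m),
      ∑ q : Fin d × Fin n, lancasterLs m n d P p q * C (V0 j q) = 0 := by
    intro j p
    have h := hVzero j p
    calc ∑ q : Fin d × Fin n, lancasterLs m n d P p q * C (V0 j q)
        = ∑ q : Fin d × Fin n, C (V0 j q) * lancasterLs n m d (fun i => (P i)ᵀ) q p :=
          Finset.sum_congr rfl fun q _ => by
            rw [lancasterLs_transpose m n d P p q, mul_comm]
      _ = 0 := h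
  refine ⟨?_, ?_, ?_, ?_⟩
  · -- (a) rows dependent
    left
    intro hli
    have hk1 : 0 < m * (d - 1) - (hankelT m n d P).rank := by omega
    set i0 : Fin (m * (d - 1) - (hankelT m n d P).rank) := ⟨0, hk1⟩
    have hU0 : U i0 ≠ 0 := hUli.ne_zero i0
    obtain ⟨p0, hp0⟩ : ∃ p, U i0 p ≠ 0 := by
      by_contra hcon
      push_neg at hcon
      exact hU0 (funext hcon)
    have hsum : ∑ p : Fin d × Fin m, (fun p => toRat (C (U i0 p))) p •
        (lancasterLs m n d P).map toRat p = (0 : Fin d × Fin n → RatFunc ℂ) := by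
      funext q
      rw [Finset.sum_apply, Pi.zero_apply]
      calc ∑ p : Fin d × Fin m,
            ((fun p => toRat (C (U i0 p))) p • (lancasterLs m n d P).map toRat p) q
          = ∑ p : Fin d × Fin m,
              algebraMap (Polynomial ℂ) (RatFunc ℂ) (C (U i0 p) * lancasterLs m n d P p q) := by
            refine Finset.sum_congr rfl fun p _ => ?_
            simp only [Pi.smul_apply, smul_eq_mul, Matrix.map_apply, toRat, _root_.map_mul]
        _ = algebraMap (Polynomial ℂ) (RatFunc ℂ)
              (∑ p : Fin d × Fin m, C (U i0 p) * lancasterLs m n d P p q) :=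
            (map_sum (algebraMap (Polynomial ℂ) (RatFunc ℂ)) _ _).symm
        _ = 0 := by rw [hUzero i0 q, map_zero]
    have hz := Fintype.linearIndependent_iff.mp hli (fun p => toRat (C (U i0 p))) hsum p0
    simp only [toRat, map_eq_zero_iff _ (IsFractionRing.injective (Polynomial ℂ) (RatFunc ℂ)),
      Polynomial.C_eq_zero] at hz
    exact hp0 hz
  · -- (b) strict equivalence
    have hUli' : LinearIndependent ℂ
        (fun i => (fun j : Fin (d * m) => U i (finProdFinEquiv.symm j))) := by
      have h := hUli.map'
        (LinearEquiv.funCongrLeft ℂ ℂ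
          (finProdFinEquiv.symm : Fin (d * m) ≃ Fin d × Fin m)).toLinearMap
        (LinearEquiv.ker _)
      exact h
    have hVli' : LinearIndependent ℂ
        (fun i => (fun j : Fin (d * n) => V0 i (finProdFinEquiv.symm j))) := by
      have h := hVli.map'
        (LinearEquiv.funCongrLeft ℂ ℂ
          (finProdFinEquiv.symm : Fin (d * n) ≃ Fin d × Fin n)).toLinearMap
        (LinearEquiv.ker _)
      exact h
    have hk1m : m * (d - 1) - (hankelT m n d P).rank ≤ d * m := by
      have h1 : m * (d - 1) ≤ m * d := Nat.mul_le_mul_left _ (Nat.sub_le d 1)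
      have h2 : m * d = d * m := Nat.mul_comm m d
      omega
    have hk2n : n * (d - 1) - (hankelT m n d P).rank ≤ d * n := by
      have h1 : n * (d - 1) ≤ n * d := Nat.mul_le_mul_left _ (Nat.sub_le d 1)
      have h2 : n * d = d * n := Nat.mul_comm n d
      omega
    obtain ⟨E, hEdet, hErows⟩ := exists_invertible_extension hk1m _ hUli'
    obtain ⟨F0, hF0det, hFrows⟩ := exists_invertible_extension hk2n _ hVli'
    have hrow : ∀ (i : Fin (d * m)) (h : i.1 < m * (d - 1) - (hankelT m n d P).rank)
        (c : Fin (d * n)),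
        (E.map (fun x => C x) * (Matrix.reindex finProdFinEquiv finProdFinEquiv
          (lancasterLs m n d P))) i c = 0 := by
      intro i h c
      rw [Matrix.mul_apply]
      calc ∑ p : Fin (d * m), (E.map (fun x => C x)) i p *
            (Matrix.reindex finProdFinEquiv finProdFinEquiv (lancasterLs m n d P)) p c
          = ∑ p : Fin (d * m), C (U ⟨i.1, h⟩ (finProdFinEquiv.symm p)) *
              lancasterLs m n d P (finProdFinEquiv.symm p) (finProdFinEquiv.symm c) := by
            refine Finset.sum_congr rfl fun p _ => ?_
            rw [Matrix.map_apply, Matrix.reindex_apply, Matrix.submatrix_apply,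
              congrFun (hErows i h) p]
        _ = ∑ p' : Fin d × Fin m, C (U ⟨i.1, h⟩ p') *
              lancasterLs m n d P p' (finProdFinEquiv.symm c) :=
            Equiv.sum_comp (finProdFinEquiv.symm : Fin (d * m) ≃ Fin d × Fin m)
              (fun p' => C (U ⟨i.1, h⟩ p') * lancasterLs m n d P p' (finProdFinEquiv.symm c))
        _ = 0 := hUzero _ _
    have hcol : ∀ (j : Fin (d * n)) (h : j.1 < n * (d - 1) - (hankelT m n d P).rank)
        (p : Fin (d * m)),
        ((Matrix.reindex finProdFinEquiv finProdFinEquiv (lancasterLs m n d P)) *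
          F0ᵀ.map (fun x => C x)) p j = 0 := by
      intro j h p
      rw [Matrix.mul_apply]
      calc ∑ c : Fin (d * n),
            (Matrix.reindex finProdFinEquiv finProdFinEquiv (lancasterLs m n d P)) p c *
              (F0ᵀ.map (fun x => C x)) c j
          = ∑ c : Fin (d * n),
              lancasterLs m n d P (finProdFinEquiv.symm p) (finProdFinEquiv.symm c) *
                C (V0 ⟨j.1, h⟩ (finProdFinEquiv.symm c)) := by
            refine Finset.sum_congr rfl fun c _ => ?_
            rw [Matrix.map_apply, Matrix.transpose_apply, Matrix.reindex_apply,
              Matrix.submatrix_apply, congrFun (hFrows j h) c]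
        _ = ∑ q' : Fin d × Fin n,
              lancasterLs m n d P (finProdFinEquiv.symm p) q' * C (V0 ⟨j.1, h⟩ q') :=
            Equiv.sum_comp (finProdFinEquiv.symm : Fin (d * n) ≃ Fin d × Fin n)
              (fun q' => lancasterLs m n d P (finProdFinEquiv.symm p) q' * C (V0 ⟨j.1, h⟩ q'))
        _ = 0 := hVzero' _ _
    refine ⟨E, F0ᵀ, hEdet, by rw [Matrix.det_transpose]; exact hF0det, ?_⟩
    intro i j hij
    rcases hij with h | h
    · rw [Matrix.mul_apply]
      exact Finset.sum_eq_zero fun c _ => by rw [hrow i h c, zero_mul]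
    · rw [Matrix.mul_assoc, Matrix.mul_apply]
      exact Finset.sum_eq_zero fun p _ => by rw [hcol j h p, mul_zero]
  · -- (c) left
    refine ⟨U, ?_, ?_⟩
    · rw [hUli.rank_matrix, Fintype.card_fin]
    · refine Matrix.ext fun i q => ?_
      simp only [Matrix.mul_apply, Matrix.map_apply, Matrix.zero_apply]
      exact hUzero i q
  · -- (c) right
    refine ⟨V0ᵀ, ?_, ?_⟩
    · rw [Matrix.rank_transpose, hVli.rank_matrix, Fintype.card_fin]
    · refine Matrix.ext fun p j => ?_
      simp only [Matrix.mul_apply, Matrix.map_apply, Matrix.transpose_apply, Matrix.zero_apply]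
      exact hVzero' j p
end
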